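/- arXiv:1309.6058 — 5 statements merged into one kernel-verified Lean document; each statement's English description precedes it below -/
import Mathlib

section
/- For any n×q real matrix Y, any n×p real matrix X, and any natural number r, the infimum of ‖Y − XC‖² over all p×q real matrices C with rank(C) ≤ r equals the infimum of ‖Y − XC‖² over all p×q real matrices C with rank(XC) ≤ r. -/
open Matrix

/-- Squared Frobenius norm of a real matrix: `‖M‖² = tr(MᵀM) = ∑ᵢⱼ Mᵢⱼ²`. -/
noncomputable def frobSq {m n : ℕ} (M : Matrix (Fin m) (Fin n) ℝ) : ℝ :=
  ∑ i, ∑ j, (M i j) ^ 2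

lemma exists_low_rank_factor {n p q : ℕ} (X : Matrix (Fin n) (Fin p) ℝ)
    (C : Matrix (Fin p) (Fin q) ℝ) :
    ∃ C' : Matrix (Fin p) (Fin q) ℝ, C'.rank ≤ (X * C).rank ∧ X * C' = X * C := by
  set f := X.mulVecLin with hf
  obtain ⟨g, hg⟩ := f.rangeRestrict.exists_rightInverse_of_surjective f.range_rangeRestrict
  have hle : LinearMap.range (X * C).mulVecLin ≤ LinearMap.range f := by
    rw [Matrix.mulVecLin_mul]
    exact LinearMap.range_comp_le_range _ _
  set T : LinearMap.range (X * C).mulVecLin →ₗ[ℝ] (Fin p → ℝ) :=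
    g ∘ₗ Submodule.inclusion hle with hT
  set L : (Fin q → ℝ) →ₗ[ℝ] (Fin p → ℝ) := T ∘ₗ (X * C).mulVecLin.rangeRestrict with hL
  refine ⟨LinearMap.toMatrix' L, ?_, ?_⟩
  · have hml : (LinearMap.toMatrix' L).mulVecLin = L := by
      rw [← Matrix.toLin'_apply', Matrix.toLin'_toMatrix']
    rw [Matrix.rank, hml, hL, LinearMap.range_comp, LinearMap.range_rangeRestrict]
    calc Module.finrank ℝ (Submodule.map T ⊤) ≤ Module.finrank ℝ (⊤ : Submodule ℝ (LinearMap.range (X * C).mulVecLin)) :=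
          Submodule.finrank_map_le _ _
      _ = (X * C).rank := by rw [finrank_top]; rfl
  · have hml : (LinearMap.toMatrix' L).mulVecLin = L := by
      rw [← Matrix.toLin'_apply', Matrix.toLin'_toMatrix']
    have h2 : ∀ y : LinearMap.range f, f (g y) = (y : Fin n → ℝ) := by
      intro y
      have := congrFun (congrArg (fun m => m.toFun) hg) y
      simpa using congrArg (Subtype.val) this
    apply Matrix.toLin'.injective
    rw [Matrix.toLin'_apply', Matrix.toLin'_apply', Matrix.mulVecLin_mul, hml]
    refine LinearMap.ext fun v => ?_
    simp only [LinearMap.comp_apply]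
    have : f (L v) = (X * C).mulVec v := by
      rw [hL, hT]
      simp only [LinearMap.comp_apply]
      rw [h2]
      rfl
    simpa [hf] using this

/-- The infimum of `‖Y - XC‖²` over `{C : rank C ≤ r}` equals the infimum over
`{C : rank (XC) ≤ r}`. -/
theorem inf_rank_constraint_eq (n p q : ℕ) (r : ℕ)
    (Y : Matrix (Fin n) (Fin q) ℝ) (X : Matrix (Fin n) (Fin p) ℝ) :
    sInf {t : ℝ | ∃ C : Matrix (Fin p) (Fin q) ℝ, C.rank ≤ r ∧ t = frobSq (Y - X * C)} =
      sInf {t : ℝ | ∃ C : Matrix (Fin p) (Fin q) ℝ, (X * C).rank ≤ r ∧ t = frobSq (Y - X * C)} := by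
  congr 1
  ext t
  constructor
  · rintro ⟨C, hC, rfl⟩
    exact ⟨C, le_trans (Matrix.rank_mul_le_right X C) hC, rfl⟩
  · rintro ⟨C, hC, rfl⟩
    obtain ⟨C', hr, he⟩ := exists_low_rank_factor X C
    exact ⟨C', hr.trans hC, by rw [he]⟩
end

section
/- Let Y be an n×q real matrix, let Z_j be n×K real matrices for j = 0,1,…,p, let Z = (Z_0,…,Z_p) be the n×(p+1)K matrix obtained by concatenating them, let A be a q×r real matrix with AᵀA = I_r, let λ > 0, a > 2, n ≥ 1, and let 1 ≤ s ≤ p. For B = (B_0ᵀ,…,B_pᵀ)ᵀ with each B_j a K×r real matrix, define F(B) = ‖Y − Z B Aᵀ‖² + n Σ_{j=1}^p p_λ(‖B_j‖). Suppose B satisfies: (i) Z_jᵀ(YA − ZB) = 0 for all 0 ≤ j ≤ s; (ii) ‖B_j‖ > aλ for all 1 ≤ j ≤ s; (iii) for all j > s, B_j = 0 and ‖2 Z_jᵀ(YA − ZB)‖ < nλ. Then B is a local minimizer of F. -/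
open Matrix

/-- Frobenius norm of a real matrix. -/
noncomputable def frobNorm {m n : ℕ} (M : Matrix (Fin m) (Fin n) ℝ) : ℝ :=
  Real.sqrt (frobSq M)

/-- Derivative of the SCAD penalty with parameters `lam` and `a`. -/
noncomputable def scadDeriv (lam a t : ℝ) : ℝ :=
  lam * (if t ≤ lam then 1 else max (a * lam - t) 0 / ((a - 1) * lam))

/-- The SCAD penalty `p_lam(x) = ∫₀ˣ ṗ_lam(t) dt`. -/
noncomputable def scad (lam a x : ℝ) : ℝ :=
  ∫ t in (0:ℝ)..x, scadDeriv lam a t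

noncomputable def inn {m n : ℕ} (X Y : Matrix (Fin m) (Fin n) ℝ) : ℝ :=
  ∑ i, ∑ j, X i j * Y i j

lemma frobSq_nonneg {m n : ℕ} (M : Matrix (Fin m) (Fin n) ℝ) : 0 ≤ frobSq M :=
  Finset.sum_nonneg fun _ _ => Finset.sum_nonneg fun _ _ => sq_nonneg _

lemma frobNorm_nonneg {m n : ℕ} (M : Matrix (Fin m) (Fin n) ℝ) : 0 ≤ frobNorm M :=
  Real.sqrt_nonneg _

lemma frobNorm_sq {m n : ℕ} (M : Matrix (Fin m) (Fin n) ℝ) : frobNorm M ^ 2 = frobSq M :=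
  Real.sq_sqrt (frobSq_nonneg M)

lemma frobSq_sub {m n : ℕ} (X Y : Matrix (Fin m) (Fin n) ℝ) :
    frobSq (X - Y) = frobSq X - 2 * inn X Y + frobSq Y := by
  simp only [frobSq, inn, Matrix.sub_apply]
  have h : ∀ i j, (X i j - Y i j) ^ 2 = X i j ^ 2 - 2 * (X i j * Y i j) + Y i j ^ 2 := by
    intro i j; ring
  simp_rw [h, Finset.sum_add_distrib, Finset.sum_sub_distrib, ← Finset.mul_sum]

lemma frobSq_add {m n : ℕ} (X Y : Matrix (Fin m) (Fin n) ℝ) :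
    frobSq (X + Y) = frobSq X + 2 * inn X Y + frobSq Y := by
  have := frobSq_sub X (-Y)
  simp only [sub_neg_eq_add] at this
  rw [this]
  have h1 : inn X (-Y) = - inn X Y := by
    simp [inn, Finset.sum_neg_distrib]
  have h2 : frobSq (-Y) = frobSq Y := by simp [frobSq]
  rw [h1, h2]; ring

lemma inn_le {m n : ℕ} (X Y : Matrix (Fin m) (Fin n) ℝ) :
    inn X Y ≤ frobNorm X * frobNorm Y := by
  have := Real.sum_mul_le_sqrt_mul_sqrt Finset.univ
    (fun p : Fin m × Fin n => X p.1 p.2) (fun p => Y p.1 p.2)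
  simpa [inn, frobNorm, frobSq, Fintype.sum_prod_type] using this

lemma frobNorm_smul2 {m n : ℕ} (M : Matrix (Fin m) (Fin n) ℝ) :
    frobNorm ((2:ℝ) • M) = 2 * frobNorm M := by
  have h : frobSq ((2:ℝ) • M) = 4 * frobSq M := by
    simp [frobSq, Matrix.smul_apply, mul_pow, Finset.mul_sum]
    norm_num [Finset.mul_sum, mul_comm]
  rw [frobNorm, h, show (4:ℝ) = 2^2 by norm_num, Real.sqrt_mul (by positivity),
    Real.sqrt_sq (by norm_num)]; rfl

lemma frobNorm_zero {m n : ℕ} : frobNorm (0 : Matrix (Fin m) (Fin n) ℝ) = 0 := by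
  simp [frobNorm, frobSq]

lemma frobNorm_add_le {m n : ℕ} (X Y : Matrix (Fin m) (Fin n) ℝ) :
    frobNorm (X + Y) ≤ frobNorm X + frobNorm Y := by
  have h1 : frobSq (X + Y) ≤ (frobNorm X + frobNorm Y) ^ 2 := by
    rw [frobSq_add, add_sq, frobNorm_sq, frobNorm_sq]
    nlinarith [inn_le X Y]
  calc frobNorm (X + Y) = Real.sqrt (frobSq (X + Y)) := rfl
    _ ≤ Real.sqrt ((frobNorm X + frobNorm Y) ^ 2) := Real.sqrt_le_sqrt h1
    _ = frobNorm X + frobNorm Y :=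
        Real.sqrt_sq (add_nonneg (frobNorm_nonneg _) (frobNorm_nonneg _))

lemma frobNorm_sub_le {m n : ℕ} (X Y : Matrix (Fin m) (Fin n) ℝ) :
    frobNorm X - frobNorm (X - Y) ≤ frobNorm Y := by
  have := frobNorm_add_le (X - Y) Y
  rw [sub_add_cancel] at this
  linarith

lemma inn_eq_trace {m n : ℕ} (X Y : Matrix (Fin m) (Fin n) ℝ) :
    inn X Y = Matrix.trace (Xᵀ * Y) := by
  simp only [inn, Matrix.trace, Matrix.diag, Matrix.mul_apply, Matrix.transpose_apply]
  exact Finset.sum_comm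

lemma frobSq_eq_inn {m n : ℕ} (M : Matrix (Fin m) (Fin n) ℝ) : frobSq M = inn M M := by
  simp [frobSq, inn, sq]

lemma inn_adjoint {n K r : ℕ} (Zm : Matrix (Fin n) (Fin K) ℝ)
    (R : Matrix (Fin n) (Fin r) ℝ) (D : Matrix (Fin K) (Fin r) ℝ) :
    inn R (Zm * D) = inn (Zmᵀ * R) D := by
  rw [inn_eq_trace, inn_eq_trace, Matrix.transpose_mul, Matrix.transpose_transpose,
    ← Matrix.mul_assoc]

lemma inn_A_right {n q r : ℕ} (X : Matrix (Fin n) (Fin q) ℝ)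
    (M : Matrix (Fin n) (Fin r) ℝ) (A : Matrix (Fin q) (Fin r) ℝ) :
    inn X (M * Aᵀ) = inn (X * A) M := by
  rw [inn_eq_trace, inn_eq_trace, Matrix.transpose_mul,
    ← Matrix.mul_assoc, Matrix.trace_mul_cycle]

lemma frobSq_A {n q r : ℕ} (M : Matrix (Fin n) (Fin r) ℝ) (A : Matrix (Fin q) (Fin r) ℝ)
    (hA : Aᵀ * A = 1) : frobSq (M * Aᵀ) = frobSq M := by
  rw [frobSq_eq_inn, frobSq_eq_inn, inn_eq_trace, inn_eq_trace, Matrix.transpose_mul,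
    Matrix.transpose_transpose]
  rw [show A * Mᵀ * (M * Aᵀ) = A * (Mᵀ * M) * Aᵀ by simp [Matrix.mul_assoc],
    Matrix.trace_mul_cycle, ← Matrix.mul_assoc, hA, Matrix.one_mul]

lemma inn_sum_right {m n : ℕ} {ι : Type*} (t : Finset ι) (X : Matrix (Fin m) (Fin n) ℝ)
    (Y : ι → Matrix (Fin m) (Fin n) ℝ) :
    inn X (∑ k ∈ t, Y k) = ∑ k ∈ t, inn X (Y k) := by
  simp [inn_eq_trace, Matrix.mul_sum]


lemma scadDeriv_eq (lam a : ℝ) (hlam : 0 < lam) (ha : 2 < a) (t : ℝ) :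
    scadDeriv lam a t = min lam (max (a * lam - t) 0 / (a - 1)) := by
  unfold scadDeriv
  have ha1 : (0:ℝ) < a - 1 := by linarith
  split_ifs with h
  · rw [mul_one, eq_comm, min_eq_left_iff, le_div_iff₀ ha1]
    have h2 : lam * (a - 1) ≤ a * lam - t := by nlinarith
    exact le_trans h2 (le_max_left _ _)
  · push_neg at h
    have hval : lam * (max (a * lam - t) 0 / ((a - 1) * lam)) = max (a * lam - t) 0 / (a - 1) := by
      field_simp
    rw [hval, eq_comm, min_eq_right_iff]
    rw [div_le_iff₀ ha1]
    have : a * lam - t ≤ lam * (a - 1) := by nlinarith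
    exact max_le this (by positivity)

lemma scadDeriv_continuous (lam a : ℝ) (hlam : 0 < lam) (ha : 2 < a) :
    Continuous (scadDeriv lam a) := by
  have : scadDeriv lam a = fun t => min lam (max (a * lam - t) 0 / (a - 1)) := by
    funext t; exact scadDeriv_eq lam a hlam ha t
  rw [this]
  fun_prop

lemma scadDeriv_nonneg (lam a : ℝ) (hlam : 0 < lam) (ha : 2 < a) (t : ℝ) :
    0 ≤ scadDeriv lam a t := by
  rw [scadDeriv_eq lam a hlam ha t]
  have ha1 : (0:ℝ) < a - 1 := by linarith
  exact le_min hlam.le (by positivity)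

lemma scad_small (lam a x : ℝ) (hlam : 0 < lam) (hx0 : 0 ≤ x) (hx : x ≤ lam) :
    scad lam a x = lam * x := by
  unfold scad
  rw [intervalIntegral.integral_congr (g := fun _ => lam), intervalIntegral.integral_const,
    smul_eq_mul, sub_zero, mul_comm]
  intro t ht
  rw [Set.uIcc_of_le hx0] at ht
  unfold scadDeriv
  rw [if_pos (le_trans ht.2 hx), mul_one]

lemma scad_flat (lam a x : ℝ) (hlam : 0 < lam) (ha : 2 < a) (hx : a * lam ≤ x) :
    scad lam a x = scad lam a (a * lam) := by
  have hint : ∀ u v : ℝ, IntervalIntegrable (scadDeriv lam a) MeasureTheory.volume u v :=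
    fun u v => (scadDeriv_continuous lam a hlam ha).intervalIntegrable u v
  have hsplit : scad lam a x = scad lam a (a * lam) + ∫ t in (a*lam)..x, scadDeriv lam a t := by
    unfold scad
    rw [intervalIntegral.integral_add_adjacent_intervals (hint _ _) (hint _ _)]
  rw [hsplit]
  have : (∫ t in (a*lam)..x, scadDeriv lam a t) = 0 := by
    rw [intervalIntegral.integral_congr (g := fun _ => 0), intervalIntegral.integral_zero]
    intro t ht
    rw [Set.uIcc_of_le hx] at ht
    rw [scadDeriv_eq lam a hlam ha t]
    have : max (a * lam - t) 0 = 0 := max_eq_right (by linarith [ht.1])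
    rw [this, zero_div, min_eq_right hlam.le]
  rw [this, add_zero]

lemma scad_zero (lam a : ℝ) : scad lam a 0 = 0 := intervalIntegral.integral_same

/-- Second-order sufficiency claim for a local minimizer of the group-SCAD penalized
reduced-rank least squares objective with fixed orthonormal factor `A`. -/
theorem scad_local_minimizer (n p q K r s : ℕ) (hn : 1 ≤ n) (hs1 : 1 ≤ s) (hsp : s ≤ p)
    (Y : Matrix (Fin n) (Fin q) ℝ)
    (Z : Fin (p + 1) → Matrix (Fin n) (Fin K) ℝ)
    (A : Matrix (Fin q) (Fin r) ℝ) (hA : Aᵀ * A = 1)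
    (lam a : ℝ) (hlam : 0 < lam) (ha : 2 < a)
    (B : Fin (p + 1) → Matrix (Fin K) (Fin r) ℝ)
    (hi : ∀ j : Fin (p + 1), (j : ℕ) ≤ s →
      (Z j)ᵀ * (Y * A - ∑ k, Z k * B k) = 0)
    (hii : ∀ j : Fin (p + 1), 1 ≤ (j : ℕ) → (j : ℕ) ≤ s → frobNorm (B j) > a * lam)
    (hiii : ∀ j : Fin (p + 1), s < (j : ℕ) →
      B j = 0 ∧ frobNorm ((2 : ℝ) • ((Z j)ᵀ * (Y * A - ∑ k, Z k * B k))) < n * lam) :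
    IsLocalMin
      (fun B' : Fin (p + 1) → Matrix (Fin K) (Fin r) ℝ =>
        frobSq (Y - (∑ k, Z k * B' k) * Aᵀ) +
          n * ∑ j ∈ Finset.univ.filter (fun j : Fin (p + 1) => 1 ≤ (j : ℕ)),
            scad lam a (frobNorm (B' j))) B := by
  classical
  set R : Matrix (Fin n) (Fin r) ℝ := Y * A - ∑ k, Z k * B k with hRdef
  -- the neighborhood
  set S : Set (Fin (p + 1) → Matrix (Fin K) (Fin r) ℝ) :=
    {B' | (∀ j : Fin (p + 1), 1 ≤ (j : ℕ) → (j : ℕ) ≤ s → a * lam < frobNorm (B' j)) ∧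
          (∀ j : Fin (p + 1), frobNorm (B' j - B j) < lam)} with hSdef
  have hmem : B ∈ S := by
    refine ⟨fun j h1 h2 => hii j h1 h2, fun j => ?_⟩
    simp [sub_self, frobNorm_zero, hlam]
  have hcont : ∀ (j : Fin (p + 1)) (C : Matrix (Fin K) (Fin r) ℝ),
      Continuous fun B' : Fin (p + 1) → Matrix (Fin K) (Fin r) ℝ => frobNorm (B' j - C) := by
    intro j C
    unfold frobNorm frobSq
    apply Continuous.sqrt
    apply continuous_finset_sum _ fun i _ => continuous_finset_sum _ fun c _ => ?_
    have h1 : Continuous fun B' : Fin (p + 1) → Matrix (Fin K) (Fin r) ℝ => B' j i c :=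
      (continuous_apply c).comp ((continuous_apply i).comp (continuous_apply j))
    simp only [Matrix.sub_apply]
    exact (h1.sub continuous_const).pow 2
  have hopen : IsOpen S := by
    have hSeq : S =
        (⋂ j : Fin (p + 1), {B' : Fin (p + 1) → Matrix (Fin K) (Fin r) ℝ |
            1 ≤ (j : ℕ) → (j : ℕ) ≤ s → a * lam < frobNorm (B' j)}) ∩
        (⋂ j : Fin (p + 1), {B' : Fin (p + 1) → Matrix (Fin K) (Fin r) ℝ |
            frobNorm (B' j - B j) < lam}) := by
      ext B'; simp [hSdef, Set.mem_iInter]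
    rw [hSeq]
    apply IsOpen.inter
    · apply isOpen_iInter_of_finite
      intro j
      by_cases hj : 1 ≤ (j : ℕ) ∧ (j : ℕ) ≤ s
      · have : {B' : Fin (p + 1) → Matrix (Fin K) (Fin r) ℝ |
            1 ≤ (j : ℕ) → (j : ℕ) ≤ s → a * lam < frobNorm (B' j)} =
            (fun B' : Fin (p + 1) → Matrix (Fin K) (Fin r) ℝ => frobNorm (B' j - 0)) ⁻¹'
              Set.Ioi (a * lam) := by
          ext B'; simp [hj.1, hj.2, sub_zero]
        rw [this]
        exact isOpen_Ioi.preimage (hcont j 0)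
      · have : {B' : Fin (p + 1) → Matrix (Fin K) (Fin r) ℝ |
            1 ≤ (j : ℕ) → (j : ℕ) ≤ s → a * lam < frobNorm (B' j)} = Set.univ := by
          ext B'; simp only [Set.mem_setOf_eq, Set.mem_univ, iff_true]
          intro h1 h2; exact absurd ⟨h1, h2⟩ hj
        rw [this]; exact isOpen_univ
    · apply isOpen_iInter_of_finite
      intro j
      exact isOpen_Iio.preimage (hcont j (B j))
  refine Filter.eventually_of_mem (hopen.mem_nhds hmem) ?_
  intro B' hB'
  obtain ⟨hB'1, hB'2⟩ := hB'
  dsimp only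
  -- reduction to the rotated problem
  have hkey : ∀ C : Fin (p + 1) → Matrix (Fin K) (Fin r) ℝ,
      frobSq (Y - (∑ k, Z k * C k) * Aᵀ)
        = frobSq Y - frobSq (Y * A) + frobSq (Y * A - ∑ k, Z k * C k) := by
    intro C
    rw [frobSq_sub, frobSq_sub, inn_A_right, frobSq_A _ A hA]
    ring
  rw [hkey B, hkey B']
  set D : Fin (p + 1) → Matrix (Fin K) (Fin r) ℝ := fun k => B' k - B k with hDdef
  have hZD : ∑ k, Z k * D k = (∑ k, Z k * B' k) - ∑ k, Z k * B k := by
    rw [← Finset.sum_sub_distrib]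
    exact Finset.sum_congr rfl fun k _ => by rw [hDdef]; exact Matrix.mul_sub _ _ _
  have hRB' : Y * A - ∑ k, Z k * B' k = R - ∑ k, Z k * D k := by
    rw [hZD, hRdef]; abel
  rw [← hRdef, hRB', frobSq_sub R (∑ k, Z k * D k)]
  -- the inner product term
  have hinn : inn R (∑ k, Z k * D k)
      = ∑ k ∈ Finset.univ.filter (fun k : Fin (p + 1) => s < (k : ℕ)),
          inn ((Z k)ᵀ * R) (D k) := by
    rw [inn_sum_right]
    have h1 : ∀ k : Fin (p + 1), inn R (Z k * D k) = inn ((Z k)ᵀ * R) (D k) :=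
      fun k => inn_adjoint (Z k) R (D k)
    simp_rw [h1]
    rw [← Finset.sum_filter_add_sum_filter_not Finset.univ (fun k : Fin (p + 1) => s < (k : ℕ))]
    have h2 : ∑ k ∈ Finset.univ.filter (fun k : Fin (p + 1) => ¬ s < (k : ℕ)),
        inn ((Z k)ᵀ * R) (D k) = 0 := by
      refine Finset.sum_eq_zero fun k hk => ?_
      have hk' : (k : ℕ) ≤ s := by
        have := (Finset.mem_filter.mp hk).2
        omega
      rw [hRdef, hi k hk']
      simp [inn]
    rw [h2, add_zero]
  -- bound on the cross terms
  have hbound : ∀ k ∈ Finset.univ.filter (fun k : Fin (p + 1) => s < (k : ℕ)),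
      2 * inn ((Z k)ᵀ * R) (D k) ≤ (n : ℝ) * lam * frobNorm (D k) := by
    intro k hk
    have hk' : s < (k : ℕ) := (Finset.mem_filter.mp hk).2
    have h2 := (hiii k hk').2
    rw [frobNorm_smul2] at h2
    have hcs := inn_le ((Z k)ᵀ * R) (D k)
    nlinarith [frobNorm_nonneg (D k), frobNorm_nonneg ((Z k)ᵀ * R)]
  -- penalty comparison
  have hfilter : (Finset.univ.filter (fun j : Fin (p + 1) => 1 ≤ (j : ℕ))).filter
      (fun j : Fin (p + 1) => ¬ (j : ℕ) ≤ s)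
      = Finset.univ.filter (fun j : Fin (p + 1) => s < (j : ℕ)) := by
    rw [Finset.filter_filter]
    apply Finset.filter_congr
    intro j _
    constructor
    · rintro ⟨_, h⟩; omega
    · intro h; omega
  have hpen : ∀ C : Fin (p + 1) → Matrix (Fin K) (Fin r) ℝ,
      ∑ j ∈ Finset.univ.filter (fun j : Fin (p + 1) => 1 ≤ (j : ℕ)),
          scad lam a (frobNorm (C j))
        = (∑ j ∈ (Finset.univ.filter (fun j : Fin (p + 1) => 1 ≤ (j : ℕ))).filter
              (fun j : Fin (p + 1) => (j : ℕ) ≤ s), scad lam a (frobNorm (C j)))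
          + ∑ j ∈ Finset.univ.filter (fun j : Fin (p + 1) => s < (j : ℕ)),
              scad lam a (frobNorm (C j)) := by
    intro C
    rw [← hfilter]
    exact (Finset.sum_filter_add_sum_filter_not _ _ _).symm
  rw [hpen B, hpen B']
  -- the first penalty blocks agree
  have hflat : ∑ j ∈ (Finset.univ.filter (fun j : Fin (p + 1) => 1 ≤ (j : ℕ))).filter
        (fun j : Fin (p + 1) => (j : ℕ) ≤ s), scad lam a (frobNorm (B' j))
      = ∑ j ∈ (Finset.univ.filter (fun j : Fin (p + 1) => 1 ≤ (j : ℕ))).filter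
        (fun j : Fin (p + 1) => (j : ℕ) ≤ s), scad lam a (frobNorm (B j)) := by
    refine Finset.sum_congr rfl fun j hj => ?_
    rw [Finset.mem_filter, Finset.mem_filter] at hj
    have h1 : 1 ≤ (j : ℕ) := hj.1.2
    have h2 : (j : ℕ) ≤ s := hj.2
    rw [scad_flat lam a _ hlam ha (le_of_lt (hB'1 j h1 h2)),
      scad_flat lam a _ hlam ha (le_of_lt (hii j h1 h2))]
  -- the tail penalty blocks
  have htailB : ∑ j ∈ Finset.univ.filter (fun j : Fin (p + 1) => s < (j : ℕ)),
      scad lam a (frobNorm (B j)) = 0 := by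
    refine Finset.sum_eq_zero fun j hj => ?_
    rw [(hiii j (Finset.mem_filter.mp hj).2).1, frobNorm_zero, scad_zero]
  have htailB' : ∑ j ∈ Finset.univ.filter (fun j : Fin (p + 1) => s < (j : ℕ)),
      scad lam a (frobNorm (B' j))
      = ∑ j ∈ Finset.univ.filter (fun j : Fin (p + 1) => s < (j : ℕ)),
          lam * frobNorm (D j) := by
    refine Finset.sum_congr rfl fun j hj => ?_
    have hj' : s < (j : ℕ) := (Finset.mem_filter.mp hj).2
    have hBj : B j = 0 := (hiii j hj').1
    have hDj : D j = B' j := by rw [hDdef]; simp [hBj]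
    have hle : frobNorm (B' j) ≤ lam := by
      have := hB'2 j
      rw [hBj, sub_zero] at this
      exact this.le
    rw [scad_small lam a _ hlam (frobNorm_nonneg _) hle, hDj]
  rw [hflat, htailB, htailB', hinn]
  -- final arithmetic
  have hsum1 : 2 * ∑ k ∈ Finset.univ.filter (fun k : Fin (p + 1) => s < (k : ℕ)),
      inn ((Z k)ᵀ * R) (D k)
      ≤ ∑ k ∈ Finset.univ.filter (fun k : Fin (p + 1) => s < (k : ℕ)),
          (n : ℝ) * lam * frobNorm (D k) := by
    rw [Finset.mul_sum]
    exact Finset.sum_le_sum hbound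
  have hsum2 : (n : ℝ) * ∑ j ∈ Finset.univ.filter (fun j : Fin (p + 1) => s < (j : ℕ)),
      lam * frobNorm (D j)
      = ∑ j ∈ Finset.univ.filter (fun j : Fin (p + 1) => s < (j : ℕ)),
          (n : ℝ) * lam * frobNorm (D j) := by
    rw [Finset.mul_sum]
    exact Finset.sum_congr rfl fun j _ => by ring
  have hZDnn := frobSq_nonneg (∑ k, Z k * D k)
  nlinarith [hsum1, hsum2, hZDnn]
end

section
/- There exists a constant C > 0 such that for every real δ > 0 and every real r ≥ 1, ∫₀^δ √(log((δ+1)√r/ε)) dε ≤ C · δ · max(log(1/δ), log r, 1). -/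
/-!
Since `√x ≤ (1 + x) / 2` for `x ≥ 0`, the integrand is dominated by `(1 + log A - log ε) / 2`
with `A = (δ + 1) √r`, whose integral over `(0, δ)` is `δ (1 + log (A / δ) / 2)` because
`∫₀^δ log ε dε = δ log δ - δ`. Finally `log (A / δ) = log (1 + 1/δ) + (log r) / 2`, and
`log (1 + t) ≤ 1 + max (log t) 0`.
-/

open MeasureTheory Set Real

lemma Real.sqrt_le_one_add_div_two {x : ℝ} (hx : 0 ≤ x) : √x ≤ (1 + x) / 2 := by
  nlinarith [two_mul_le_add_sq (√x) 1, sq_sqrt hx]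

lemma Real.log_one_add_le {t : ℝ} (ht : 0 < t) : log (1 + t) ≤ 1 + max (log t) 0 := by
  rcases le_total t 1 with ht1 | ht1
  · have := log_le_sub_one_of_pos (x := 1 + t) (by linarith)
    linarith [le_max_right (log t) 0]
  · have h := log_le_sub_one_of_pos (x := (1 + t) / t) (by positivity)
    rw [log_div (by linarith) ht.ne', add_div, div_self ht.ne'] at h
    have : 1 / t ≤ 1 := (div_le_one ht).2 ht1
    linarith [le_max_left (log t) 0]

lemma integrableOn_Ioo_zero_log (δ : ℝ) : IntegrableOn log (Ioo 0 δ) :=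
  (intervalIntegral.intervalIntegrable_log' (a := 0) (b := δ)).1.mono_set Ioo_subset_Ioc_self

lemma integral_Ioo_zero_log {δ : ℝ} (hδ : 0 ≤ δ) :
    ∫ x in Ioo 0 δ, log x = δ * log δ - δ := by
  rw [← integral_Ioc_eq_integral_Ioo, ← intervalIntegral.integral_of_le hδ,
    integral_log_from_zero]

lemma integral_Ioo_zero_sqrt_log_div_le {A δ : ℝ} (hδ : 0 < δ) (hδA : δ ≤ A) :
    ∫ ε in Ioo 0 δ, √(log (A / ε)) ≤ δ * (1 + log (A / δ) / 2) := by
  have hA : 0 < A := hδ.trans_le hδA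
  set g : ℝ → ℝ := fun ε => (1 + log A - log ε) / 2
  have hconst : IntegrableOn (fun _ : ℝ => 1 + log A) (Ioo 0 δ) :=
    integrableOn_const measure_Ioo_lt_top.ne
  have hg : IntegrableOn g (Ioo 0 δ) := (hconst.sub (integrableOn_Ioo_zero_log δ)).div_const 2
  have hbound : ∀ ε ∈ Ioo 0 δ, √(log (A / ε)) ≤ g ε := fun ε hε => calc
    √(log (A / ε)) ≤ (1 + log (A / ε)) / 2 :=
      sqrt_le_one_add_div_two (log_nonneg ((one_le_div hε.1).2 (hε.2.le.trans hδA)))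
    _ = g ε := by rw [log_div hA.ne' hε.1.ne', ← add_sub_assoc]
  have hf : IntegrableOn (fun ε => √(log (A / ε))) (Ioo 0 δ) := by
    refine hg.mono' (measurable_const.div measurable_id).log.sqrt.aestronglyMeasurable
      (ae_restrict_of_forall_mem measurableSet_Ioo fun ε hε => ?_)
    rw [norm_of_nonneg (sqrt_nonneg _)]
    exact hbound ε hε
  calc ∫ ε in Ioo 0 δ, √(log (A / ε)) ≤ ∫ ε in Ioo 0 δ, g ε :=
        setIntegral_mono_on hf hg measurableSet_Ioo hbound
    _ = δ * (1 + log (A / δ) / 2) := by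
      simp only [g]
      rw [integral_div, integral_sub hconst (integrableOn_Ioo_zero_log δ), setIntegral_const,
        integral_Ioo_zero_log hδ.le, log_div hA.ne' hδ.ne', measureReal_def, volume_Ioo, sub_zero,
        ENNReal.toReal_ofReal hδ.le, smul_eq_mul]
      ring

/-- Lemma B.4: entropy-integral bound
`∫₀^δ √(log((δ+1)√r/ε)) dε ≤ C δ max(log(1/δ), log r, 1)`. -/
theorem entropy_integral_bound :
    ∃ C : ℝ, 0 < C ∧ ∀ δ : ℝ, 0 < δ → ∀ r : ℝ, 1 ≤ r →
      (∫ ε in Set.Ioo (0:ℝ) δ, Real.sqrt (Real.log ((δ + 1) * Real.sqrt r / ε)))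
        ≤ C * δ * max (max (Real.log (1 / δ)) (Real.log r)) 1 := by
  refine ⟨3, by norm_num, fun δ hδ r hr => ?_⟩
  set M := max (max (log (1 / δ)) (log r)) 1
  have hM : 1 ≤ M := le_max_right _ _
  have hδM : log (1 / δ) ≤ M := le_max_of_le_left (le_max_left _ _)
  have hrM : log r ≤ M := le_max_of_le_left (le_max_right _ _)
  have hδA : δ ≤ (δ + 1) * √r := by nlinarith [one_le_sqrt.2 hr]
  have hlog : log ((δ + 1) * √r / δ) = log (1 + 1 / δ) + log r / 2 := by
    rw [mul_div_right_comm, add_div, div_self hδ.ne', log_mul (by positivity) (by positivity),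
      log_sqrt (by linarith)]
  have hkey : 1 + log ((δ + 1) * √r / δ) / 2 ≤ 3 * M := by
    have := log_one_add_le (one_div_pos.2 hδ)
    rw [hlog]
    linarith [max_le hδM (by linarith : (0 : ℝ) ≤ M)]
  calc ∫ ε in Ioo 0 δ, √(log ((δ + 1) * √r / ε))
      ≤ δ * (1 + log ((δ + 1) * √r / δ) / 2) := integral_Ioo_zero_sqrt_log_div_le hδ hδA
    _ ≤ δ * (3 * M) := by gcongr
    _ = 3 * δ * M := by ring
end

section
/- For every real a ≥ 20, ∫_a^∞ √(log(2y))/y² dy ≤ log(a)/a. -/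
/-!
Since `√` is concave, `√t ≤ (t + L) / (2√L)` (tangent line at `L = log (2a)`). The majorant
`(log (2y) + L) / y²` has the explicit antiderivative `-(log (2y) + 1 + L) / y`, so the tail
integral is at most `(2L + 1) / (2√L) / a`. For `a ≥ 20` we have `L ≥ 3`, which makes this at most
`(L - log 2) / a = log a / a`.
-/

open MeasureTheory Filter Real Topology Set

lemma sqrt_le_add_div_two_sqrt {t c : ℝ} (ht : 0 ≤ t) (hc : 0 < c) :
    √t ≤ (t + c) / (2 * √c) := by
  rw [le_div_iff₀ (by positivity)]
  nlinarith [sq_nonneg (√t - √c), sq_sqrt ht, sq_sqrt hc.le]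

lemma hasDerivAt_log_mul_add_div {c d x : ℝ} (hc : c ≠ 0) (hx : x ≠ 0) :
    HasDerivAt (fun y ↦ -(log (c * y) + 1 + d) / y) ((log (c * x) + d) / x ^ 2) x := by
  have hlog : HasDerivAt (fun y ↦ log (c * y)) x⁻¹ x := by
    convert ((hasDerivAt_id' x).const_mul c).log (mul_ne_zero hc hx) using 1
    field_simp
  have hnum : HasDerivAt (fun y ↦ -(log (c * y) + 1 + d)) (-x⁻¹) x :=
    ((hlog.add_const 1).add_const d).neg
  refine (hnum.div (hasDerivAt_id' x) hx).congr_deriv ?_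
  field_simp
  ring

lemma tendsto_log_mul_add_div_atTop (c d : ℝ) :
    Tendsto (fun y ↦ (log (c * y) + d) / y) atTop (𝓝 0) := by
  rcases eq_or_ne c 0 with rfl | hc
  · simpa using tendsto_const_nhds.div_atTop tendsto_id
  have h := isLittleO_log_id_atTop.tendsto_div_nhds_zero.add
    ((tendsto_const_nhds (x := log c + d)).div_atTop tendsto_id)
  rw [zero_add] at h
  refine h.congr' ?_
  filter_upwards [eventually_gt_atTop 0] with y hy
  rw [log_mul hc hy.ne', id]
  ring

lemma integral_Ioi_log_mul_add_div_sq {b c d : ℝ} (hb : 0 < b) (hc : 0 < c)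
    (hd : 0 ≤ log (c * b) + d) :
    IntegrableOn (fun y ↦ (log (c * y) + d) / y ^ 2) (Ioi b) ∧
      ∫ y in Ioi b, (log (c * y) + d) / y ^ 2 = (log (c * b) + 1 + d) / b := by
  have hderiv : ∀ x ∈ Ici b, HasDerivAt (fun y ↦ -(log (c * y) + 1 + d) / y)
      ((log (c * x) + d) / x ^ 2) x := fun x hx ↦
    hasDerivAt_log_mul_add_div hc.ne' (hb.trans_le hx).ne'
  have hnonneg : ∀ x ∈ Ioi b, 0 ≤ (log (c * x) + d) / x ^ 2 := fun x hx ↦ by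
    have : log (c * b) ≤ log (c * x) := log_le_log (by positivity) (by gcongr; exact hx.out.le)
    exact div_nonneg (by linarith) (sq_nonneg x)
  have hlim : Tendsto (fun y ↦ -(log (c * y) + 1 + d) / y) atTop (𝓝 0) := by
    have h := (tendsto_log_mul_add_div_atTop c (1 + d)).neg
    rw [neg_zero] at h
    exact h.congr fun y ↦ by ring
  refine ⟨integrableOn_Ioi_deriv_of_nonneg' hderiv hnonneg hlim, ?_⟩
  rw [integral_Ioi_of_hasDerivAt_of_nonneg' hderiv hnonneg hlim]
  ring

lemma three_le_log {x : ℝ} (hx : 40 ≤ x) : 3 ≤ log x := by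
  rw [le_log_iff_exp_le (by linarith)]
  calc exp 3 = exp 1 ^ 3 := by rw [← exp_nat_mul]; norm_num
    _ ≤ 2.72 ^ 3 := by gcongr; exact exp_one_lt_d9.le.trans (by norm_num)
    _ ≤ x := by linarith

lemma two_mul_add_one_div_two_sqrt_le {L : ℝ} (hL : 3 ≤ L) :
    (2 * L + 1) / (2 * √L) ≤ L - log 2 := by
  obtain ⟨s, hs, rfl⟩ : ∃ s, 0 ≤ s ∧ L = s ^ 2 :=
    ⟨√L, sqrt_nonneg L, (sq_sqrt (by linarith)).symm⟩
  have hs' : 1.73 ≤ s := by nlinarith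
  rw [sqrt_sq hs, div_le_iff₀ (by positivity)]
  nlinarith [log_two_lt_d9]

/-- For every real `a ≥ 20`, `∫_a^∞ √(log(2y))/y² dy ≤ log(a)/a`. -/
theorem tail_integral_le (a : ℝ) (ha : 20 ≤ a) :
    (∫ y in Set.Ioi a, Real.sqrt (Real.log (2 * y)) / y ^ 2) ≤ Real.log a / a := by
  have ha0 : 0 < a := by linarith
  set L := log (2 * a) with hL_def
  have hL : 3 ≤ L := three_le_log (by linarith)
  obtain ⟨hint, hval⟩ := integral_Ioi_log_mul_add_div_sq (d := L) ha0 two_pos (by linarith)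
  have hg := hint.div_const (2 * √L)
  have hbound : ∀ y ∈ Ioi a, √(log (2 * y)) / y ^ 2 ≤ (log (2 * y) + L) / y ^ 2 / (2 * √L) := by
    intro y (hy : a < y)
    have hLy : L ≤ log (2 * y) := log_le_log (by positivity) (by linarith)
    rw [div_right_comm]
    gcongr
    exact sqrt_le_add_div_two_sqrt (by linarith) (by linarith)
  have hf : IntegrableOn (fun y ↦ √(log (2 * y)) / y ^ 2) (Ioi a) := by
    refine hg.mono' (by fun_prop : Measurable _).aestronglyMeasurable ?_
    filter_upwards [ae_restrict_mem measurableSet_Ioi] with y hy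
    rw [norm_of_nonneg (by positivity)]
    exact hbound y hy
  calc ∫ y in Ioi a, √(log (2 * y)) / y ^ 2
      ≤ ∫ y in Ioi a, (log (2 * y) + L) / y ^ 2 / (2 * √L) :=
        setIntegral_mono_on hf hg measurableSet_Ioi hbound
    _ = (2 * L + 1) / (2 * √L) / a := by rw [integral_div, hval, div_right_comm]; ring
    _ ≤ (L - log 2) / a := by gcongr; exact two_mul_add_one_div_two_sqrt_le hL
    _ = log a / a := by rw [hL_def, log_mul two_ne_zero ha0.ne']; ring
end

section
/- Let (Ω, 𝓕, P) be a probability space and let X_1, …, X_n be independent identically distributed nonnegative real random variables. Let q, L, σ > 0 be reals and suppose E[exp(X_1/(qL²))] ≤ 1 + σ²/L². Then P(X_1 + ⋯ + X_n > 2nqσ²) ≤ 2·exp(−nσ²/(3L²)). -/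
open MeasureTheory ProbabilityTheory

/-! Chernoff's bound at `t = 1/(qL²)`: by independence the moment generating function of the sum
is at most `(1 + σ²/L²)ⁿ ≤ exp(nσ²/L²)`, while `exp(-t · 2nqσ²) = exp(-2nσ²/L²)`, so the tail is at
most `exp(-nσ²/L²)`. -/

theorem Real.one_add_pow_le_exp_mul {a : ℝ} (ha : -1 ≤ a) (n : ℕ) :
    (1 + a) ^ n ≤ Real.exp (n * a) := by
  rw [Real.exp_nat_mul]
  exact pow_le_pow_left₀ (by linarith) (by linarith [Real.add_one_le_exp a]) n

namespace ProbabilityTheory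

variable {Ω ι : Type*} [MeasurableSpace Ω] {μ : Measure Ω} [Fintype ι] {X : ι → Ω → ℝ}

theorem iIndepFun.measure_sum_ge_le_exp_of_mgf_le (h_indep : iIndepFun X μ)
    (h_meas : ∀ i, Measurable (X i)) {t a : ℝ} (ht : 0 ≤ t) (ha : -1 ≤ a)
    (h_int : ∀ i, Integrable (fun ω => Real.exp (t * X i ω)) μ)
    (h_mgf : ∀ i, mgf (X i) μ t ≤ 1 + a) (ε : ℝ) :
    μ.real {ω | ε ≤ ∑ i, X i ω} ≤ Real.exp (-t * ε + Fintype.card ι * a) := by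
  have := h_indep.isProbabilityMeasure
  have h_int_sum := h_indep.integrable_exp_mul_sum h_meas (s := Finset.univ) fun i _ => h_int i
  have h_mgf_sum : mgf (∑ i, X i) μ t ≤ (1 + a) ^ Fintype.card ι := by
    rw [h_indep.mgf_sum h_meas]
    calc ∏ i, mgf (X i) μ t ≤ ∏ _i : ι, (1 + a) :=
          Finset.prod_le_prod (fun _ _ => mgf_nonneg) fun i _ => h_mgf i
      _ = (1 + a) ^ Fintype.card ι := by rw [Finset.prod_const, Finset.card_univ]
  calc μ.real {ω | ε ≤ ∑ i, X i ω}
      = μ.real {ω | ε ≤ (∑ i, X i) ω} := by simp only [Finset.sum_apply]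
    _ ≤ Real.exp (-t * ε) * mgf (∑ i, X i) μ t := measure_ge_le_exp_mul_mgf ε ht h_int_sum
    _ ≤ Real.exp (-t * ε) * Real.exp (Fintype.card ι * a) := by
      gcongr
      exact h_mgf_sum.trans (Real.one_add_pow_le_exp_mul ha _)
    _ = Real.exp (-t * ε + Fintype.card ι * a) := (Real.exp_add _ _).symm

end ProbabilityTheory

theorem sum_tail_bound_general {Ω : Type*} [MeasurableSpace Ω]
    (P : Measure Ω)
    (n : ℕ) (X : Fin n → Ω → ℝ)
    (hmeas : ∀ i, Measurable (X i))
    (hindep : iIndepFun X P)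
    (q L σ : ℝ) (hq : 0 < q)
    (hint : ∀ i, Integrable (fun ω => Real.exp (X i ω / (q * L ^ 2))) P)
    (hbound : ∀ i, (∫ ω, Real.exp (X i ω / (q * L ^ 2)) ∂P) ≤ 1 + σ ^ 2 / L ^ 2) :
    P {ω | 2 * n * q * σ ^ 2 < ∑ i, X i ω}
      ≤ ENNReal.ofReal (2 * Real.exp (-(n * σ ^ 2) / (3 * L ^ 2))) := by
  have := hindep.isProbabilityMeasure
  set t := (q * L ^ 2)⁻¹
  have h_exp_eq (i : Fin n) (ω : Ω) : Real.exp (t * X i ω) = Real.exp (X i ω / (q * L ^ 2)) := by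
    rw [div_eq_inv_mul]
  have h_chernoff := hindep.measure_sum_ge_le_exp_of_mgf_le hmeas (t := t) (a := σ ^ 2 / L ^ 2)
    (by positivity) (by linarith [show 0 ≤ σ ^ 2 / L ^ 2 by positivity])
    (fun i => by simpa only [h_exp_eq] using hint i)
    (fun i => by simpa only [mgf, h_exp_eq] using hbound i) (2 * n * q * σ ^ 2)
  have h_exponent : -t * (2 * n * q * σ ^ 2) + Fintype.card (Fin n) * (σ ^ 2 / L ^ 2)
      = -(n * σ ^ 2 / L ^ 2) := by
    rw [Fintype.card_fin]
    linear_combination (-2 * n * σ ^ 2 * (L ^ 2)⁻¹) * inv_mul_cancel₀ hq.ne'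
  have h_exp_le : Real.exp (-(n * σ ^ 2 / L ^ 2)) ≤ 2 * Real.exp (-(n * σ ^ 2) / (3 * L ^ 2)) := by
    have h_nonneg : 0 ≤ n * σ ^ 2 / L ^ 2 := by positivity
    have : Real.exp (-(n * σ ^ 2 / L ^ 2)) ≤ Real.exp (-(n * σ ^ 2) / (3 * L ^ 2)) := by
      gcongr
      rw [neg_div, mul_comm 3, ← div_div]
      linarith
    linarith [Real.exp_pos (-(n * σ ^ 2) / (3 * L ^ 2))]
  calc P {ω | 2 * n * q * σ ^ 2 < ∑ i, X i ω}
      ≤ P {ω | 2 * n * q * σ ^ 2 ≤ ∑ i, X i ω} :=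
        measure_mono (Set.ofPred_subset_ofPred.2 fun _ => le_of_lt)
    _ = ENNReal.ofReal (P.real {ω | 2 * n * q * σ ^ 2 ≤ ∑ i, X i ω}) := (ofReal_measureReal).symm
    _ ≤ ENNReal.ofReal (2 * Real.exp (-(n * σ ^ 2) / (3 * L ^ 2))) :=
        ENNReal.ofReal_le_ofReal (h_chernoff.trans (h_exponent ▸ h_exp_le))

/-- Lemma B.5 with explicit constants: for i.i.d. nonnegative random variables with
`E[exp(X₁/(qL²))] ≤ 1 + σ²/L²`, one has
`P(X₁ + ⋯ + Xₙ > 2nqσ²) ≤ 2 exp(−nσ²/(3L²))`. -/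
theorem sum_tail_bound {Ω : Type*} [MeasurableSpace Ω]
    (P : Measure Ω) [IsProbabilityMeasure P]
    (n : ℕ) (hn : 1 ≤ n) (X : Fin n → Ω → ℝ)
    (hmeas : ∀ i, Measurable (X i))
    (hnonneg : ∀ i, ∀ᵐ ω ∂P, 0 ≤ X i ω)
    (hindep : iIndepFun X P)
    (hident : ∀ i j, IdentDistrib (X i) (X j) P P)
    (q L σ : ℝ) (hq : 0 < q) (hL : 0 < L) (hσ : 0 < σ)
    (hint : ∀ i, Integrable (fun ω => Real.exp (X i ω / (q * L ^ 2))) P)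
    (hbound : ∀ i, (∫ ω, Real.exp (X i ω / (q * L ^ 2)) ∂P) ≤ 1 + σ ^ 2 / L ^ 2) :
    P {ω | 2 * n * q * σ ^ 2 < ∑ i, X i ω}
      ≤ ENNReal.ofReal (2 * Real.exp (-(n * σ ^ 2) / (3 * L ^ 2))) :=
  sum_tail_bound_general P n X hmeas hindep q L σ hq hint hbound
end
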